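/- Let M_p satisfy (M.1), (M.2), (M.3)'. Suppose f is a compactly supported ultradistribution of class (M_p) on an open Ω ⊆ ℝ^d, φ_ε is an (N_p)-net of mollifiers with 𝓕φ supported in {|ξ| ≤ 2}, and assume the Beurling-case estimates: (∃ k, h, C', ε_0 > 0)(∀ l > 0 ∃ C'_l) such that for all ε < ε_0 and all ξ ∈ ℝ^d, |𝓕f(ξ)| ≤ C' (e^{M(|ξ|/h) − M(c/(hε))} + e^{M(k/ε) − M(|ξ|/l)}) with c > 0 a fixed constant, where the first term's constant is uniform and the second holds for every l. Then for every λ > 0, sup_ξ |𝓕f(ξ)| e^{M(|ξ|/λ)} < ∞. -/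

import Mathlib

/-!
For `|ξ|` large take `ε = c m / (|ξ| H)`, `m = min 1 (λ / h)` and `l = min (λ / H) (c m / (k H²))`.
Then `c / (h ε) = H · |ξ| / (h m)` and `|ξ| / l = H · |ξ| / (H l)`, where `|ξ| / (h m)` dominates
`|ξ| / h` and `|ξ| / (H l)` dominates `k / ε`, and both dominate `|ξ| / λ`. Since `M` is increasing,
`2 M(t) ≤ M(H t) + log A` (from (M.2)) bounds each exponential of the estimate by
`A e^{-M(|ξ| / λ)}`. On bounded sets of `ξ` any fixed `ε` does. `M` is finite because, by the ratio
test, (M.3)' makes `t^p / M_p` summable.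
-/

open Real Set

/-- The associated function `M(t) = sup_{p ∈ ℕ} log (t^p / M_p)`. -/
noncomputable def Massoc (M : ℕ → ℝ) (t : ℝ) : ℝ :=
  ⨆ p : ℕ, Real.log (t ^ p / M p)

open Filter

section Massoc

variable {M : ℕ → ℝ}

theorem summable_pow_div_of_summable_div_succ (hpos : ∀ p, 0 < M p)
    (hM3' : Summable fun p : ℕ => M p / M (p + 1)) (t : ℝ) :
    Summable fun p => t ^ p / M p := by
  have hr : 0 < |t| + 1 := by positivity
  refine Summable.of_norm_bounded (g := fun p => (|t| + 1) ^ p / M p) ?_ fun p => ?_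
  · refine summable_of_ratio_test_tendsto_lt_one zero_lt_one
      (Eventually.of_forall fun p => (div_pos (pow_pos hr p) (hpos p)).ne') ?_
    have hratio : (fun p => ‖(|t| + 1) ^ (p + 1) / M (p + 1)‖ / ‖(|t| + 1) ^ p / M p‖) =
        fun p => (|t| + 1) * (M p / M (p + 1)) := by
      ext p
      have := hpos p
      have := hpos (p + 1)
      rw [Real.norm_of_nonneg (by positivity), Real.norm_of_nonneg (by positivity)]
      field_simp
      ring
    rw [hratio]
    simpa using hM3'.tendsto_atTop_zero.const_mul (|t| + 1)
  · rw [norm_div, norm_pow, Real.norm_of_nonneg (hpos p).le, Real.norm_eq_abs]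
    gcongr
    · exact (hpos p).le
    · linarith

theorem bddAbove_range_log_pow_div (hpos : ∀ p, 0 < M p)
    (hM3' : Summable fun p : ℕ => M p / M (p + 1)) (t : ℝ) :
    BddAbove (range fun p => Real.log (t ^ p / M p)) := by
  obtain ⟨B, hB⟩ :=
    ((summable_pow_div_of_summable_div_succ hpos hM3' t).tendsto_atTop_zero.abs).bddAbove_range
  refine ⟨B, forall_mem_range.2 fun p => ?_⟩
  rw [← Real.log_abs]
  exact (Real.log_le_self (abs_nonneg _)).trans (hB (mem_range_self p))

theorem log_pow_div_le_massoc (hpos : ∀ p, 0 < M p)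
    (hM3' : Summable fun p : ℕ => M p / M (p + 1)) (t : ℝ) (p : ℕ) :
    Real.log (t ^ p / M p) ≤ Massoc M t :=
  le_ciSup (bddAbove_range_log_pow_div hpos hM3' t) p

theorem massoc_nonneg (hpos : ∀ p, 0 < M p) (hM0 : M 0 = 1)
    (hM3' : Summable fun p : ℕ => M p / M (p + 1)) (t : ℝ) : 0 ≤ Massoc M t := by
  simpa [hM0] using log_pow_div_le_massoc hpos hM3' t 0

theorem massoc_le_massoc (hpos : ∀ p, 0 < M p) (hM0 : M 0 = 1)
    (hM3' : Summable fun p : ℕ => M p / M (p + 1)) {s t : ℝ} (hs : 0 ≤ s) (hst : s ≤ t) :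
    Massoc M s ≤ Massoc M t := by
  refine ciSup_le fun p => ?_
  rcases (div_nonneg (pow_nonneg hs p) (hpos p).le).eq_or_lt with h0 | h0
  · rw [← h0, Real.log_zero]
    exact massoc_nonneg hpos hM0 hM3' t
  · refine (Real.log_le_log h0 ?_).trans (log_pow_div_le_massoc hpos hM3' t p)
    have := hpos p
    gcongr

theorem two_mul_massoc_le {A H : ℝ} (hpos : ∀ p, 0 < M p)
    (hM2 : ∀ p q : ℕ, M (p + q) ≤ A * H ^ (p + q) * M p * M q)
    (hM3' : Summable fun p : ℕ => M p / M (p + 1)) {t : ℝ} (ht : t ≠ 0) :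
    2 * Massoc M t ≤ Massoc M (H * t) + Real.log A := by
  rw [← le_div_iff₀' two_pos]
  refine ciSup_le fun p => ?_
  have hMp := hpos p
  have hsq_pos : 0 < (t ^ p / M p) ^ 2 :=
    pow_two_pos_of_ne_zero (div_ne_zero (pow_ne_zero p ht) hMp.ne')
  have hsq_le : (t ^ p / M p) ^ 2 ≤ A * ((H * t) ^ (2 * p) / M (2 * p)) := by
    have hM2p := hpos (2 * p)
    rw [mul_div_assoc', le_div_iff₀ hM2p, div_pow, div_mul_eq_mul_div,
      div_le_iff₀ (by positivity)]
    calc (t ^ p) ^ 2 * M (2 * p) ≤ (t ^ p) ^ 2 * (A * H ^ (2 * p) * M p * M p) := by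
          gcongr
          simpa [two_mul] using hM2 p p
      _ = A * (H * t) ^ (2 * p) * M p ^ 2 := by ring
  obtain ⟨hA, hX⟩ := mul_ne_zero_iff.1 (hsq_pos.trans_le hsq_le).ne'
  rw [le_div_iff₀' two_pos]
  calc 2 * Real.log (t ^ p / M p) = Real.log ((t ^ p / M p) ^ 2) := by
        rw [Real.log_pow]; norm_num
    _ ≤ Real.log (A * ((H * t) ^ (2 * p) / M (2 * p))) := Real.log_le_log hsq_pos hsq_le
    _ = Real.log A + Real.log ((H * t) ^ (2 * p) / M (2 * p)) := Real.log_mul hA hX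
    _ ≤ Massoc M (H * t) + Real.log A := by
        linarith [log_pow_div_le_massoc hpos hM3' (H * t) (2 * p)]

theorem exp_massoc_sub_massoc_mul_le {A H : ℝ} (hpos : ∀ p, 0 < M p) (hM0 : M 0 = 1)
    (hA : 0 < A) (hM2 : ∀ p q : ℕ, M (p + q) ≤ A * H ^ (p + q) * M p * M q)
    (hM3' : Summable fun p : ℕ => M p / M (p + 1)) {a b t : ℝ} (ha : 0 < a) (hat : a ≤ t)
    (hb : 0 ≤ b) (hbt : b ≤ t) :
    exp (Massoc M a - Massoc M (H * t)) ≤ A * exp (-Massoc M b) := by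
  have hMa := massoc_le_massoc hpos hM0 hM3' ha.le hat
  have hMb := massoc_le_massoc hpos hM0 hM3' hb hbt
  have h2M := two_mul_massoc_le hpos hM2 hM3' (ha.trans_le hat).ne'
  rw [← exp_log hA, ← exp_add]
  gcongr
  linarith

theorem mul_exp_massoc_le_of_le_radius (hpos : ∀ p, 0 < M p) (hM0 : M 0 = 1)
    (hM3' : Summable fun p : ℕ => M p / M (p + 1)) {y C x R h lam s u v : ℝ} (hC : 0 ≤ C)
    (hh : 0 < h) (hlam : 0 < lam) (hx : 0 ≤ x) (hxR : x ≤ R)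
    (hy : y ≤ C * (exp (Massoc M (x / h) - Massoc M s) + exp (Massoc M u - Massoc M v))) :
    y * exp (Massoc M (x / lam)) ≤
      C * (exp (Massoc M (R / h)) + exp (Massoc M u)) * exp (Massoc M (R / lam)) := by
  have hy' : y ≤ C * (exp (Massoc M (R / h)) + exp (Massoc M u)) := by
    refine hy.trans ?_
    have := massoc_le_massoc hpos hM0 hM3' (by positivity) (div_le_div_of_nonneg_right hxR hh.le)
    have := massoc_nonneg hpos hM0 hM3' s
    have := massoc_nonneg hpos hM0 hM3' v
    gcongr <;> linarith
  refine mul_le_mul hy' ?_ (exp_pos _).le (by positivity)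
  exact exp_le_exp.2 <|
    massoc_le_massoc hpos hM0 hM3' (by positivity) (div_le_div_of_nonneg_right hxR hlam.le)

theorem mul_exp_massoc_le_two_mul {A H : ℝ} (hpos : ∀ p, 0 < M p) (hM0 : M 0 = 1)
    (hA : 0 < A) (hM2 : ∀ p q : ℕ, M (p + q) ≤ A * H ^ (p + q) * M p * M q)
    (hM3' : Summable fun p : ℕ => M p / M (p + 1)) {y C a₁ t₁ a₂ t₂ b : ℝ} (hC : 0 ≤ C)
    (ha₁ : 0 < a₁) (ha₁t : a₁ ≤ t₁) (ha₂ : 0 < a₂) (ha₂t : a₂ ≤ t₂) (hb : 0 ≤ b)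
    (hbt₁ : b ≤ t₁) (hbt₂ : b ≤ t₂)
    (hy : y ≤ C * (exp (Massoc M a₁ - Massoc M (H * t₁)) +
      exp (Massoc M a₂ - Massoc M (H * t₂)))) :
    y * exp (Massoc M b) ≤ 2 * A * C := by
  have hy' : y ≤ 2 * A * C * exp (-Massoc M b) := by
    refine hy.trans ?_
    have := exp_massoc_sub_massoc_mul_le hpos hM0 hA hM2 hM3' ha₁ ha₁t hb hbt₁
    have := exp_massoc_sub_massoc_mul_le hpos hM0 hA hM2 hM3' ha₂ ha₂t hb hbt₂
    nlinarith
  calc y * exp (Massoc M b) ≤ 2 * A * C * exp (-Massoc M b) * exp (Massoc M b) := by gcongr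
    _ = 2 * A * C := by rw [mul_assoc, ← exp_add, neg_add_cancel, exp_zero, mul_one]

theorem mul_exp_massoc_le_of_radius_lt {A H : ℝ} (hpos : ∀ p, 0 < M p) (hM0 : M 0 = 1)
    (hA : 0 < A) (hH : 0 < H) (hM2 : ∀ p q : ℕ, M (p + q) ≤ A * H ^ (p + q) * M p * M q)
    (hM3' : Summable fun p : ℕ => M p / M (p + 1)) {y C x k h c ε₀ lam m l : ℝ} (hC : 0 ≤ C)
    (hk : 0 < k) (hh : 0 < h) (hc : 0 < c) (hε₀ : 0 < ε₀) (hlam : 0 < lam) (hm : 0 < m)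
    (hm1 : m ≤ 1) (hhm : h * m ≤ lam) (hl : 0 < l) (hHl : H * l ≤ lam)
    (hkl : k * H ^ 2 * l ≤ c * m) (hx : c * m / (ε₀ * H) < x)
    (hy : ∀ ε ∈ Ioo 0 ε₀, y ≤ C * (exp (Massoc M (x / h) - Massoc M (c / (h * ε))) +
      exp (Massoc M (k / ε) - Massoc M (x / l)))) :
    y * exp (Massoc M (x / lam)) ≤ 2 * A * C := by
  have hx0 : 0 < x := (by positivity : 0 ≤ c * m / (ε₀ * H)).trans_lt hx
  set ε := c * m / (x * H) with hε
  have hεI : ε ∈ Ioo 0 ε₀ := ⟨by positivity, by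
    rw [div_lt_iff₀ (by positivity)]; rw [div_lt_iff₀ (by positivity)] at hx; linarith⟩
  have hyε := hy ε hεI
  rw [show c / (h * ε) = H * (x / (h * m)) by rw [hε]; field_simp,
    show x / l = H * (x / (H * l)) by field_simp] at hyε
  have hkε : k / ε ≤ x / (H * l) := by
    rw [hε, div_div_eq_mul_div, div_le_div_iff₀ (by positivity) (by positivity)]
    calc k * (x * H) * (H * l) = x * (k * H ^ 2 * l) := by ring
      _ ≤ x * (c * m) := by gcongr
  refine mul_exp_massoc_le_two_mul hpos hM0 hA hM2 hM3' hC (by positivity) ?_ (by positivity)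
    hkε (by positivity) ?_ ?_ hyε
  · exact div_le_div_of_nonneg_left hx0.le (by positivity) (mul_le_of_le_one_right hh.le hm1)
  · exact div_le_div_of_nonneg_left hx0.le (by positivity) hhm
  · exact div_le_div_of_nonneg_left hx0.le (by positivity) hHl

end Massoc

theorem beurling_regularity_optimization_general (M : ℕ → ℝ) (hpos : ∀ p, 0 < M p)
    (hM0 : M 0 = 1)
    (A H : ℝ) (hA : 1 ≤ A) (hH : 1 ≤ H)
    (hM2 : ∀ p q : ℕ, M (p + q) ≤ A * H ^ (p + q) * M p * M q)
    (hM3' : Summable (fun p : ℕ => M p / M (p + 1)))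
    {d : ℕ} (F : EuclideanSpace ℝ (Fin d) → ℂ)
    (k h c ε₀ : ℝ) (hk : 0 < k) (hh : 0 < h) (hc : 0 < c) (hε₀ : 0 < ε₀)
    (hbound : ∀ l > (0 : ℝ), ∃ C' > (0 : ℝ), ∀ ε ∈ Set.Ioo (0 : ℝ) ε₀,
      ∀ ξ : EuclideanSpace ℝ (Fin d),
        ‖F ξ‖ ≤ C' * (Real.exp (Massoc M (‖ξ‖ / h) - Massoc M (c / (h * ε))) +
          Real.exp (Massoc M (k / ε) - Massoc M (‖ξ‖ / l)))) :
    ∀ lam > (0 : ℝ), ∃ C : ℝ, ∀ ξ : EuclideanSpace ℝ (Fin d),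
      ‖F ξ‖ * Real.exp (Massoc M (‖ξ‖ / lam)) ≤ C := by
  intro lam hlam
  have hH0 : 0 < H := by linarith
  set m := min 1 (lam / h)
  have hm : 0 < m := lt_min one_pos (div_pos hlam hh)
  set l := min (lam / H) (c * m / (k * H ^ 2))
  have hl : 0 < l := lt_min (div_pos hlam hH0) (by positivity)
  obtain ⟨C', hC', hF⟩ := hbound l hl
  set R := c * m / (ε₀ * H)
  refine ⟨max (C' * (exp (Massoc M (R / h)) + exp (Massoc M (k / (ε₀ / 2)))) *
    exp (Massoc M (R / lam))) (2 * A * C'), fun ξ => ?_⟩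
  rcases le_or_gt ‖ξ‖ R with hξ | hξ
  · exact (mul_exp_massoc_le_of_le_radius hpos hM0 hM3' hC'.le hh hlam (norm_nonneg ξ) hξ
      (hF (ε₀ / 2) ⟨by positivity, by linarith⟩ ξ)).trans (le_max_left _ _)
  · exact (mul_exp_massoc_le_of_radius_lt hpos hM0 (by linarith) hH0 hM2 hM3' hC'.le hk hh hc
      hε₀ hlam hm (min_le_left _ _) ((le_div_iff₀' hh).1 (min_le_right _ _)) hl
      ((le_div_iff₀' hH0).1 (min_le_left _ _)) ((le_div_iff₀' (by positivity)).1 (min_le_right _ _))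
      hξ fun ε hε => hF ε hε ξ).trans (le_max_right _ _)

/-- Optimization step in the regularity theorem (Beurling case): if the Fourier
transform `F = 𝓕f` of a compactly supported `(M_p)`-ultradistribution satisfies
`|F(ξ)| ≤ C' (e^{M(|ξ|/h) − M(c/(hε))} + e^{M(k/ε) − M(|ξ|/l)})` for all small `ε`
and all `ξ`, uniformly in the first term and for every `l > 0` in the second, then
`sup_ξ |F(ξ)| e^{M(|ξ|/λ)} < ∞` for every `λ > 0`. -/
theorem beurling_regularity_optimization (M : ℕ → ℝ) (hpos : ∀ p, 0 < M p)
    (hM0 : M 0 = 1)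
    (hM1 : ∀ p : ℕ, 1 ≤ p → M p ^ 2 ≤ M (p - 1) * M (p + 1))
    (A H : ℝ) (hA : 1 ≤ A) (hH : 1 ≤ H)
    (hM2 : ∀ p q : ℕ, M (p + q) ≤ A * H ^ (p + q) * M p * M q)
    (hM3' : Summable (fun p : ℕ => M p / M (p + 1)))
    {d : ℕ} (F : EuclideanSpace ℝ (Fin d) → ℂ)
    (k h c ε₀ : ℝ) (hk : 0 < k) (hh : 0 < h) (hc : 0 < c) (hε₀ : 0 < ε₀)
    (hbound : ∀ l > (0 : ℝ), ∃ C' > (0 : ℝ), ∀ ε ∈ Set.Ioo (0 : ℝ) ε₀,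
      ∀ ξ : EuclideanSpace ℝ (Fin d),
        ‖F ξ‖ ≤ C' * (Real.exp (Massoc M (‖ξ‖ / h) - Massoc M (c / (h * ε))) +
          Real.exp (Massoc M (k / ε) - Massoc M (‖ξ‖ / l)))) :
    ∀ lam > (0 : ℝ), ∃ C : ℝ, ∀ ξ : EuclideanSpace ℝ (Fin d),
      ‖F ξ‖ * Real.exp (Massoc M (‖ξ‖ / lam)) ≤ C :=
  beurling_regularity_optimization_general M hpos hM0 A H hA hH hM2 hM3' F k h c ε₀ hk hh hc hε₀
    hbound
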